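/- arXiv:2105.10771 — 7 statements merged into one kernel-verified Lean document; each statement's English description precedes it below -/
import Mathlib

section
/- For the multilinear set with extended family: if z ∈ {0,1}^n and δ_i = ∏_{j∈S_i}(1 - z_j) for i ∈ {0,1,2,3} where S_0 = S_1 ∩ S_2 and S_3 = S_1 ∪ S_2, then (δ_0,δ_1,δ_2,δ_3) ∈ {(0,0,0,0),(1,0,0,0),(1,1,0,0),(1,0,1,0),(1,1,1,1)}. -/
lemma prod_one_sub_eq (n : ℕ) (S : Finset (Fin n)) (z : Fin n → ℝ)
    (hz : ∀ j, z j = 0 ∨ z j = 1) :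
    ∏ j ∈ S, (1 - z j) = if ∀ j ∈ S, z j = 0 then 1 else 0 := by
  split_ifs with h
  · exact Finset.prod_eq_one fun j hj => by rw [h j hj]; ring
  · push_neg at h
    obtain ⟨j, hj, hjz⟩ := h
    have : z j = 1 := (hz j).resolve_left hjz
    exact Finset.prod_eq_zero hj (by rw [this]; ring)

theorem extended_family_delta_values (n : ℕ) (S₁ S₂ : Finset (Fin n))
    (hS₁ : S₁.Nonempty) (hS₂ : S₂.Nonempty) (hS₀ : (S₁ ∩ S₂).Nonempty)
    (z : Fin n → ℝ) (hz : ∀ j, z j = 0 ∨ z j = 1)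
    (δ₀ δ₁ δ₂ δ₃ : ℝ)
    (hδ₀ : δ₀ = ∏ j ∈ S₁ ∩ S₂, (1 - z j))
    (hδ₁ : δ₁ = ∏ j ∈ S₁, (1 - z j))
    (hδ₂ : δ₂ = ∏ j ∈ S₂, (1 - z j))
    (hδ₃ : δ₃ = ∏ j ∈ S₁ ∪ S₂, (1 - z j)) :
    (δ₀, δ₁, δ₂, δ₃) = ((0:ℝ), (0:ℝ), (0:ℝ), (0:ℝ)) ∨
    (δ₀, δ₁, δ₂, δ₃) = (1, 0, 0, 0) ∨
    (δ₀, δ₁, δ₂, δ₃) = (1, 1, 0, 0) ∨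
    (δ₀, δ₁, δ₂, δ₃) = (1, 0, 1, 0) ∨
    (δ₀, δ₁, δ₂, δ₃) = (1, 1, 1, 1) := by
  rw [prod_one_sub_eq n _ z hz] at hδ₀ hδ₁ hδ₂ hδ₃
  subst hδ₀ hδ₁ hδ₂ hδ₃
  by_cases h1 : ∀ j ∈ S₁, z j = 0 <;>
  by_cases h2 : ∀ j ∈ S₂, z j = 0
  · have h0 : ∀ j ∈ S₁ ∩ S₂, z j = 0 := fun j hj => h1 j (Finset.mem_inter.1 hj).1
    have h3 : ∀ j ∈ S₁ ∪ S₂, z j = 0 := fun j hj =>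
      (Finset.mem_union.1 hj).elim (h1 j) (h2 j)
    rw [if_pos h0, if_pos h1, if_pos h2, if_pos h3]; tauto
  · have h0 : ∀ j ∈ S₁ ∩ S₂, z j = 0 := fun j hj => h1 j (Finset.mem_inter.1 hj).1
    have h3 : ¬ ∀ j ∈ S₁ ∪ S₂, z j = 0 := fun h =>
      h2 fun j hj => h j (Finset.mem_union_right _ hj)
    rw [if_pos h0, if_pos h1, if_neg h2, if_neg h3]; tauto
  · have h0 : ∀ j ∈ S₁ ∩ S₂, z j = 0 := fun j hj => h2 j (Finset.mem_inter.1 hj).2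
    have h3 : ¬ ∀ j ∈ S₁ ∪ S₂, z j = 0 := fun h =>
      h1 fun j hj => h j (Finset.mem_union_left _ hj)
    rw [if_pos h0, if_neg h1, if_pos h2, if_neg h3]; tauto
  · have h3 : ¬ ∀ j ∈ S₁ ∪ S₂, z j = 0 := fun h =>
      h1 fun j hj => h j (Finset.mem_union_left _ hj)
    by_cases h0 : ∀ j ∈ S₁ ∩ S₂, z j = 0
    · rw [if_pos h0, if_neg h1, if_neg h2, if_neg h3]; tauto
    · rw [if_neg h0, if_neg h1, if_neg h2, if_neg h3]; tauto
end

section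
/- Validity of inequality (2) (type-2 with upper bound): let z ∈ {0,1}^n with ∑_j z_j ≤ u, let S_1, S_2 ⊆ {1,...,n}, S_0 = S_1∩S_2, S_3 = S_1∪S_2, δ_i = ∏_{j∈S_i}(1-z_j) for i∈{1,2,3}. Then for any T ⊆ {1,...,n}: ∑_{j∈T} z_j + (u - |T∖S_1|)δ_1 + (u - |T∖S_2|)δ_2 + (|T∖S_0| - u)δ_3 ≤ u. -/
lemma prod01 {n : ℕ} (z : Fin n → ℝ) (hz : ∀ j, z j = 0 ∨ z j = 1)
    (S : Finset (Fin n)) :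
    (∏ j ∈ S, (1 - z j)) = 0 ∨
      ((∏ j ∈ S, (1 - z j)) = 1 ∧ ∀ j ∈ S, z j = 0) := by
  by_cases h : ∃ j ∈ S, z j = 1
  · obtain ⟨j, hj, hj1⟩ := h
    left
    exact Finset.prod_eq_zero hj (by rw [hj1]; ring)
  · right
    push_neg at h
    have h0 : ∀ j ∈ S, z j = 0 := fun j hj => (hz j).resolve_right (h j hj)
    exact ⟨Finset.prod_eq_one fun j hj => by rw [h0 j hj]; ring, h0⟩

lemma sumT_le {n : ℕ} (z : Fin n → ℝ) (hz : ∀ j, z j = 0 ∨ z j = 1)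
    (S T : Finset (Fin n)) (h0 : ∀ j ∈ S, z j = 0) :
    ∑ j ∈ T, z j ≤ ((T \ S).card : ℝ) := by
  have heq : ∑ j ∈ T \ S, z j = ∑ j ∈ T, z j := by
    refine Finset.sum_subset Finset.sdiff_subset (fun x hx hnx => ?_)
    have : x ∈ S := by
      by_contra hxs
      exact hnx (Finset.mem_sdiff.mpr ⟨hx, hxs⟩)
    exact h0 x this
  rw [← heq]
  calc ∑ j ∈ T \ S, z j ≤ ∑ j ∈ T \ S, 1 := by
        refine Finset.sum_le_sum fun j _ => ?_
        rcases hz j with h | h <;> rw [h] <;> norm_num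
    _ = ((T \ S).card : ℝ) := by simp

theorem ineq2_valid (n u : ℕ) (hn : 0 < n) (hu : 2 ≤ u)
    (S₁ S₂ : Finset (Fin n)) (hS₁ : S₁.Nonempty) (hS₂ : S₂.Nonempty)
    (z : Fin n → ℝ) (hz : ∀ j, z j = 0 ∨ z j = 1)
    (hcard : ∑ j, z j ≤ (u : ℝ))
    (δ₁ δ₂ δ₃ : ℝ)
    (hδ₁ : δ₁ = ∏ j ∈ S₁, (1 - z j))
    (hδ₂ : δ₂ = ∏ j ∈ S₂, (1 - z j))
    (hδ₃ : δ₃ = ∏ j ∈ S₁ ∪ S₂, (1 - z j))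
    (T : Finset (Fin n)) :
    ∑ j ∈ T, z j + ((u : ℝ) - (T \ S₁).card) * δ₁ + ((u : ℝ) - (T \ S₂).card) * δ₂
      + (((T \ (S₁ ∩ S₂)).card : ℝ) - u) * δ₃ ≤ (u : ℝ) := by
  have hzn : ∀ j, 0 ≤ z j := fun j => by rcases hz j with h | h <;> rw [h] <;> norm_num
  have hsum_all : ∑ j ∈ T, z j ≤ (u : ℝ) :=
    le_trans (Finset.sum_le_sum_of_subset_of_nonneg (Finset.subset_univ T)
      (fun j _ _ => hzn j)) hcard
  rcases prod01 z hz S₁ with h1 | ⟨h1, h1z⟩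
  · -- δ₁ = 0 hence δ₃ = 0
    have hd1 : δ₁ = 0 := hδ₁.trans h1
    have hd3 : δ₃ = 0 := by
      rw [hδ₃]
      obtain ⟨j, hj, hj0⟩ := Finset.prod_eq_zero_iff.mp h1
      exact Finset.prod_eq_zero (Finset.mem_union_left _ hj) hj0
    rcases prod01 z hz S₂ with h2 | ⟨h2, h2z⟩
    · have hd2 : δ₂ = 0 := hδ₂.trans h2
      rw [hd1, hd2, hd3]
      linarith
    · have hd2 : δ₂ = 1 := hδ₂.trans h2
      have key : ∑ j ∈ T, z j ≤ ((T \ S₂).card : ℝ) := sumT_le z hz S₂ T h2z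
      rw [hd1, hd2, hd3]
      linarith
  · have hd1 : δ₁ = 1 := hδ₁.trans h1
    rcases prod01 z hz S₂ with h2 | ⟨h2, h2z⟩
    · have hd2 : δ₂ = 0 := hδ₂.trans h2
      have hd3 : δ₃ = 0 := by
        rw [hδ₃]
        obtain ⟨j, hj, hj0⟩ := Finset.prod_eq_zero_iff.mp h2
        exact Finset.prod_eq_zero (Finset.mem_union_right _ hj) hj0
      have key : ∑ j ∈ T, z j ≤ ((T \ S₁).card : ℝ) := sumT_le z hz S₁ T h1z
      rw [hd1, hd2, hd3]
      linarith
    · have hd2 : δ₂ = 1 := hδ₂.trans h2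
      have h3z : ∀ j ∈ S₁ ∪ S₂, z j = 0 := fun j hj => by
        rcases Finset.mem_union.mp hj with h | h
        exacts [h1z j h, h2z j h]
      have hd3 : δ₃ = 1 := by
        rw [hδ₃]
        exact Finset.prod_eq_one fun j hj => by rw [h3z j hj]; ring
      have key : ∑ j ∈ T, z j ≤ ((T \ (S₁ ∪ S₂)).card : ℝ) :=
        sumT_le z hz (S₁ ∪ S₂) T h3z
      have hunion : (T \ S₁) ∪ (T \ S₂) = T \ (S₁ ∩ S₂) := by
        ext x; simp [Finset.mem_sdiff, Finset.mem_union, Finset.mem_inter]; tauto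
      have hinter : (T \ S₁) ∩ (T \ S₂) = T \ (S₁ ∪ S₂) := by
        ext x; simp [Finset.mem_sdiff, Finset.mem_union, Finset.mem_inter]; tauto
      have hcards : (T \ S₁).card + (T \ S₂).card
          = (T \ (S₁ ∩ S₂)).card + (T \ (S₁ ∪ S₂)).card := by
        rw [← hunion, ← hinter]
        exact (Finset.card_union_add_card_inter _ _).symm
      have hcardsR : ((T \ S₁).card : ℝ) + ((T \ S₂).card : ℝ)
          = ((T \ (S₁ ∩ S₂)).card : ℝ) + ((T \ (S₁ ∪ S₂)).card : ℝ) := by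
        exact_mod_cast congrArg (Nat.cast : ℕ → ℝ) hcards
      rw [hd1, hd2, hd3]
      linarith
end

section
/- Validity of inequality (5): if z ∈ {0,1}^n with ∑_j z_j ≤ u, S_3 ⊆ {1,...,n} nonempty, δ_3 = ∏_{j∈S_3}(1-z_j), and T ⊆ {1,...,n} with |T∖S_3| ≤ u, then ∑_{j∈T} z_j + (u - |T∖S_3|)δ_3 ≤ u. -/
theorem ineq5_valid (n u : ℕ) (hn : 0 < n) (hu : 0 < u)
    (S₃ : Finset (Fin n)) (hS₃ : S₃.Nonempty)
    (z : Fin n → ℝ) (hz : ∀ j, z j = 0 ∨ z j = 1)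
    (hcard : ∑ j, z j ≤ (u : ℝ))
    (δ₃ : ℝ) (hδ₃ : δ₃ = ∏ j ∈ S₃, (1 - z j))
    (T : Finset (Fin n)) (hT : (T \ S₃).card ≤ u) :
    ∑ j ∈ T, z j + ((u : ℝ) - (T \ S₃).card) * δ₃ ≤ (u : ℝ) := by
  have hz0 : ∀ j, 0 ≤ z j := fun j => by rcases hz j with h | h <;> simp [h]
  have hz1 : ∀ j, z j ≤ 1 := fun j => by rcases hz j with h | h <;> simp [h]
  by_cases hone : ∃ j ∈ S₃, z j = 1
  · obtain ⟨j, hj, hjz⟩ := hone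
    have : δ₃ = 0 := by
      rw [hδ₃]
      exact Finset.prod_eq_zero hj (by rw [hjz]; ring)
    rw [this, mul_zero, add_zero]
    calc ∑ j ∈ T, z j ≤ ∑ j, z j :=
          Finset.sum_le_sum_of_subset_of_nonneg (Finset.subset_univ T)
            (fun i _ _ => hz0 i)
      _ ≤ u := hcard
  · push_neg at hone
    have hzero : ∀ j ∈ S₃, z j = 0 := fun j hj =>
      (hz j).resolve_right (hone j hj)
    have hδ1 : δ₃ = 1 := by
      rw [hδ₃]
      exact Finset.prod_eq_one (fun j hj => by rw [hzero j hj]; ring)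
    rw [hδ1, mul_one]
    have hsplit : ∑ j ∈ T, z j = ∑ j ∈ T \ S₃, z j := by
      rw [← Finset.sum_sdiff (Finset.inter_subset_left (s₂ := S₃))]
      rw [Finset.sum_eq_zero (fun j hj => hzero j (Finset.mem_inter.mp hj).2),
        add_zero]
      congr 1
      ext x
      simp [Finset.mem_sdiff, Finset.mem_inter]
    have hbound : ∑ j ∈ T \ S₃, z j ≤ (T \ S₃).card := by
      calc ∑ j ∈ T \ S₃, z j ≤ ∑ _j ∈ T \ S₃, (1 : ℝ) :=
            Finset.sum_le_sum (fun j _ => hz1 j)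
        _ = (T \ S₃).card := by simp
    rw [hsplit]
    linarith
end

section
/- Validity of inequality (7) (type-2 with lower bound): let z ∈ {0,1}^n with ∑_j z_j ≥ l, let S_1, S_2 ⊆ {1,...,n}, S_0 = S_1∩S_2, S_3 = S_1∪S_2, δ_i = ∏_{j∈S_i}(1-z_j) for i∈{1,2,3}. Then for any T ⊆ {1,...,n}: -∑_{j∈T} z_j + (l + |T∪S_1| - n)δ_1 + (l + |T∪S_2| - n)δ_2 + (n - |T∪S_0| - l)δ_3 ≤ 0. -/
private lemma prod_zero_of_one {n : ℕ} (z : Fin n → ℝ) (S : Finset (Fin n))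
    (h : ¬ ∀ j ∈ S, z j = 0) (hz : ∀ j, z j = 0 ∨ z j = 1) :
    ∏ j ∈ S, (1 - z j) = 0 := by
  push_neg at h
  obtain ⟨j, hjS, hj⟩ := h
  apply Finset.prod_eq_zero hjS
  rcases hz j with h0 | h1
  · exact absurd h0 hj
  · simp [h1]

private lemma prod_one_of_zero {n : ℕ} (z : Fin n → ℝ) (S : Finset (Fin n))
    (h : ∀ j ∈ S, z j = 0) :
    ∏ j ∈ S, (1 - z j) = 1 := by
  apply Finset.prod_eq_one
  intro j hj
  simp [h j hj]

private lemma key {n l : ℕ} (z : Fin n → ℝ) (hz : ∀ j, z j = 0 ∨ z j = 1)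
    (hcard : (l : ℝ) ≤ ∑ j, z j) (S T : Finset (Fin n))
    (hS : ∀ j ∈ S, z j = 0) :
    (l : ℝ) + (T ∪ S).card - n ≤ ∑ j ∈ T, z j := by
  classical
  set A : Finset (Fin n) := Finset.univ.filter (fun j => z j = 1) with hA
  have hsum : ∀ s : Finset (Fin n), ∑ j ∈ s, z j = ((s.filter (fun j => z j = 1)).card : ℝ) := by
    intro s
    rw [Finset.card_filter, Nat.cast_sum]
    apply Finset.sum_congr rfl
    intro j hj
    rcases hz j with h | h <;> simp [h]
  have hTA : T.filter (fun j => z j = 1) = A ∩ T := by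
    ext j; simp [hA, and_comm]
  have hl : l ≤ A.card := by
    have := hcard
    rw [hsum Finset.univ] at this
    exact_mod_cast this
  have hdisj : Disjoint (T ∪ S) (A \ T) := by
    rw [Finset.disjoint_left]
    intro j hj hj'
    simp only [Finset.mem_sdiff, hA, Finset.mem_filter] at hj'
    rcases Finset.mem_union.mp hj with h | h
    · exact hj'.2 h
    · rw [hS j h] at hj'; norm_num at hj'
  have hcard2 : (T ∪ S).card + (A \ T).card ≤ n := by
    rw [← Finset.card_union_of_disjoint hdisj]
    exact le_trans (Finset.card_le_univ _) (by simp)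
  have hsplit : A.card ≤ (A ∩ T).card + (A \ T).card := by
    rw [Finset.card_inter_add_card_sdiff]
  have : l + (T ∪ S).card ≤ (A ∩ T).card + n := by omega
  rw [hsum T, hTA]
  have := (Nat.cast_le (α := ℝ)).mpr this
  push_cast at this ⊢
  linarith

theorem ineq7_valid (n l : ℕ) (hn : 0 < n)
    (S₁ S₂ : Finset (Fin n)) (hS₁ : S₁.Nonempty) (hS₂ : S₂.Nonempty)
    (z : Fin n → ℝ) (hz : ∀ j, z j = 0 ∨ z j = 1)
    (hcard : (l : ℝ) ≤ ∑ j, z j)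
    (δ₁ δ₂ δ₃ : ℝ)
    (hδ₁ : δ₁ = ∏ j ∈ S₁, (1 - z j))
    (hδ₂ : δ₂ = ∏ j ∈ S₂, (1 - z j))
    (hδ₃ : δ₃ = ∏ j ∈ S₁ ∪ S₂, (1 - z j))
    (T : Finset (Fin n)) :
    -∑ j ∈ T, z j + ((l : ℝ) + (T ∪ S₁).card - n) * δ₁
      + ((l : ℝ) + (T ∪ S₂).card - n) * δ₂
      + ((n : ℝ) - (T ∪ (S₁ ∩ S₂)).card - l) * δ₃ ≤ 0 := by
  classical
  have hZnn : (0 : ℝ) ≤ ∑ j ∈ T, z j :=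
    Finset.sum_nonneg fun j _ => by rcases hz j with h | h <;> simp [h]
  by_cases h1 : ∀ j ∈ S₁, z j = 0 <;> by_cases h2 : ∀ j ∈ S₂, z j = 0
  · -- both: δ₁ = δ₂ = δ₃ = 1
    have h3 : ∀ j ∈ S₁ ∪ S₂, z j = 0 := by
      intro j hj
      rcases Finset.mem_union.mp hj with h | h
      · exact h1 j h
      · exact h2 j h
    rw [hδ₁, hδ₂, hδ₃, prod_one_of_zero z _ h1, prod_one_of_zero z _ h2,
      prod_one_of_zero z _ h3]
    have hci : (T ∪ S₁).card + (T ∪ S₂).card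
        = (T ∪ (S₁ ∪ S₂)).card + (T ∪ (S₁ ∩ S₂)).card := by
      have := Finset.card_union_add_card_inter (T ∪ S₁) (T ∪ S₂)
      rw [← Finset.union_union_distrib_left, ← Finset.union_inter_distrib_left] at this
      exact this.symm
    have hk := key z hz hcard (S₁ ∪ S₂) T h3
    have hci' : ((T ∪ S₁).card : ℝ) + (T ∪ S₂).card
        = ((T ∪ (S₁ ∪ S₂)).card : ℝ) + (T ∪ (S₁ ∩ S₂)).card := by exact_mod_cast hci
    linarith
  · -- δ₁ = 1, δ₂ = δ₃ = 0
    have h3 : ¬ ∀ j ∈ S₁ ∪ S₂, z j = 0 := fun h =>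
      h2 fun j hj => h j (Finset.mem_union_right _ hj)
    rw [hδ₁, hδ₂, hδ₃, prod_one_of_zero z _ h1, prod_zero_of_one z _ h2 hz,
      prod_zero_of_one z _ h3 hz]
    have hk := key z hz hcard S₁ T h1
    linarith
  · have h3 : ¬ ∀ j ∈ S₁ ∪ S₂, z j = 0 := fun h =>
      h1 fun j hj => h j (Finset.mem_union_left _ hj)
    rw [hδ₁, hδ₂, hδ₃, prod_zero_of_one z _ h1 hz, prod_one_of_zero z _ h2,
      prod_zero_of_one z _ h3 hz]
    have hk := key z hz hcard S₂ T h2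
    linarith
  · have h3 : ¬ ∀ j ∈ S₁ ∪ S₂, z j = 0 := fun h =>
      h1 fun j hj => h j (Finset.mem_union_left _ hj)
    rw [hδ₁, hδ₂, hδ₃, prod_zero_of_one z _ h1 hz, prod_zero_of_one z _ h2 hz,
      prod_zero_of_one z _ h3 hz]
    linarith
end

section
/- Validity of inequality (10): if z ∈ {0,1}^n with ∑_j z_j ≥ l, S_3 ⊆ {1,...,n} nonempty, δ_3 = ∏_{j∈S_3}(1-z_j), and T ⊆ {1,...,n} with |T∪S_3| ≥ n - l, then -∑_{j∈T} z_j + (l + |T∪S_3| - n)δ_3 ≤ 0. -/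
theorem ineq10_valid (n l : ℕ) (hn : 0 < n)
    (S₃ : Finset (Fin n)) (hS₃ : S₃.Nonempty)
    (z : Fin n → ℝ) (hz : ∀ j, z j = 0 ∨ z j = 1)
    (hcard : (l : ℝ) ≤ ∑ j, z j)
    (δ₃ : ℝ) (hδ₃ : δ₃ = ∏ j ∈ S₃, (1 - z j))
    (T : Finset (Fin n)) (hT : n - l ≤ (T ∪ S₃).card) :
    -∑ j ∈ T, z j + ((l : ℝ) + (T ∪ S₃).card - n) * δ₃ ≤ 0 := by
  have hz0 : ∀ j, 0 ≤ z j := fun j => by rcases hz j with h|h <;> simp [h]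
  have hz1 : ∀ j, z j ≤ 1 := fun j => by rcases hz j with h|h <;> simp [h]
  have hTnn : 0 ≤ ∑ j ∈ T, z j := Finset.sum_nonneg fun j _ => hz0 j
  by_cases hδ : δ₃ = 0
  · simp [hδ]; linarith
  · have hzero : ∀ j ∈ S₃, z j = 0 := by
      intro j hj
      by_contra h
      have hj1 : z j = 1 := (hz j).resolve_left h
      exact hδ (by rw [hδ₃]; exact Finset.prod_eq_zero hj (by simp [hj1]))
    have hδ1 : δ₃ = 1 := by
      rw [hδ₃]; exact Finset.prod_eq_one fun j hj => by simp [hzero j hj]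
    have hsplit : ∑ j ∈ T ∪ S₃, z j + ∑ j ∈ (T ∪ S₃)ᶜ, z j = ∑ j, z j :=
      Finset.sum_add_sum_compl _ _
    have hinter : ∑ j ∈ T ∪ S₃, z j + ∑ j ∈ T ∩ S₃, z j = ∑ j ∈ T, z j + ∑ j ∈ S₃, z j :=
      Finset.sum_union_inter
    have hS3z : ∑ j ∈ S₃, z j = 0 := Finset.sum_eq_zero hzero
    have hinn : 0 ≤ ∑ j ∈ T ∩ S₃, z j := Finset.sum_nonneg fun j _ => hz0 j
    have hcompl : ∑ j ∈ (T ∪ S₃)ᶜ, z j ≤ ((T ∪ S₃)ᶜ.card : ℝ) := by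
      calc ∑ j ∈ (T ∪ S₃)ᶜ, z j ≤ ∑ _j ∈ (T ∪ S₃)ᶜ, (1:ℝ) :=
            Finset.sum_le_sum fun j _ => hz1 j
        _ = _ := by simp
    have hcc : ((T ∪ S₃)ᶜ.card : ℝ) = n - (T ∪ S₃).card := by
      rw [Finset.card_compl]
      rw [Nat.cast_sub (Finset.card_le_univ _)]
      simp
    rw [hδ1]
    rw [hcc] at hcompl
    linarith
end

section
/- Validity of inequality (1): let z ∈ {0,1}^n with ∑_j z_j ≤ u, let S_1, S_2 ⊆ {1,...,n} with S_0 = S_1∩S_2 ≠ ∅, δ_i = ∏_{j∈S_i}(1-z_j) for i∈{0,1,2}. Then for any T ⊆ {1,...,n} with |T∖S_0| ≤ u: ∑_{j∈T} z_j + (u - |T∖S_0|)δ_0 + |T∩(S_1∖S_0)|·δ_1 + |T∩(S_2∖S_0)|·δ_2 ≤ u. -/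
lemma bound_aux {n : ℕ} (z : Fin n → ℝ) (hz : ∀ j, z j = 0 ∨ z j = 1)
    (S A : Finset (Fin n)) (hA : A ⊆ S) :
    ∑ j ∈ A, z j + (A.card : ℝ) * ∏ j ∈ S, (1 - z j) ≤ (A.card : ℝ) := by
  by_cases h : ∃ j ∈ S, z j = 1
  · obtain ⟨j, hj, hj1⟩ := h
    have hp : ∏ j ∈ S, (1 - z j) = 0 :=
      Finset.prod_eq_zero hj (by rw [hj1]; ring)
    rw [hp, mul_zero, add_zero]
    calc ∑ j ∈ A, z j ≤ ∑ j ∈ A, (1 : ℝ) := by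
          apply Finset.sum_le_sum
          intro i _; rcases hz i with h | h <;> simp [h]
      _ = (A.card : ℝ) := by simp
  · push_neg at h
    have hz0 : ∀ j ∈ S, z j = 0 := fun j hj => (hz j).resolve_right (h j hj)
    have hp : ∏ j ∈ S, (1 - z j) = 1 := by
      apply Finset.prod_eq_one; intro j hj; rw [hz0 j hj]; ring
    have hs : ∑ j ∈ A, z j = 0 :=
      Finset.sum_eq_zero (fun j hj => hz0 j (hA hj))
    rw [hp, hs, mul_one, zero_add]

theorem ineq1_valid (n u : ℕ) (hn : 0 < n) (hu : 0 < u)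
    (S₁ S₂ : Finset (Fin n)) (hS₁ : S₁.Nonempty) (hS₂ : S₂.Nonempty)
    (hS₀ : (S₁ ∩ S₂).Nonempty)
    (z : Fin n → ℝ) (hz : ∀ j, z j = 0 ∨ z j = 1)
    (hcard : ∑ j, z j ≤ (u : ℝ))
    (δ₀ δ₁ δ₂ : ℝ)
    (hδ₀ : δ₀ = ∏ j ∈ S₁ ∩ S₂, (1 - z j))
    (hδ₁ : δ₁ = ∏ j ∈ S₁, (1 - z j))
    (hδ₂ : δ₂ = ∏ j ∈ S₂, (1 - z j))
    (T : Finset (Fin n)) (hT : (T \ (S₁ ∩ S₂)).card ≤ u) :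
    ∑ j ∈ T, z j + ((u : ℝ) - (T \ (S₁ ∩ S₂)).card) * δ₀
      + ((T ∩ (S₁ \ (S₁ ∩ S₂))).card : ℝ) * δ₁
      + ((T ∩ (S₂ \ (S₁ ∩ S₂))).card : ℝ) * δ₂ ≤ (u : ℝ) := by
  have hz0 : ∀ j, 0 ≤ z j := fun j => by rcases hz j with h | h <;> simp [h]
  set S₀ := S₁ ∩ S₂ with hS0def
  set A := T ∩ (S₁ \ S₀) with hAdef
  set B := T ∩ (S₂ \ S₀) with hBdef
  set D := T \ S₀ with hDdef
  by_cases h0 : ∃ j ∈ S₀, z j = 1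
  · -- δ₀ = δ₁ = δ₂ = 0
    obtain ⟨j, hj, hj1⟩ := h0
    have hj1' : (1 : ℝ) - z j = 0 := by rw [hj1]; ring
    have e0 : δ₀ = 0 := by rw [hδ₀]; exact Finset.prod_eq_zero hj hj1'
    have e1 : δ₁ = 0 := by
      rw [hδ₁]; exact Finset.prod_eq_zero (Finset.mem_of_mem_inter_left hj) hj1'
    have e2 : δ₂ = 0 := by
      rw [hδ₂]; exact Finset.prod_eq_zero (Finset.mem_of_mem_inter_right hj) hj1'
    rw [e0, e1, e2]
    simp only [mul_zero, add_zero]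
    calc ∑ j ∈ T, z j ≤ ∑ j, z j :=
          Finset.sum_le_sum_of_subset_of_nonneg (Finset.subset_univ T)
            (fun i _ _ => hz0 i)
      _ ≤ (u : ℝ) := hcard
  · push_neg at h0
    have hzS0 : ∀ j ∈ S₀, z j = 0 := fun j hj => (hz j).resolve_right (h0 j hj)
    have e0 : δ₀ = 1 := by
      rw [hδ₀]; apply Finset.prod_eq_one; intro j hj; rw [hzS0 j hj]; ring
    -- sum over T equals sum over D
    have hsum : ∑ j ∈ T, z j = ∑ j ∈ D, z j := by
      rw [hDdef]
      refine (Finset.sum_subset Finset.sdiff_subset ?_).symm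
      intro j hjT hjD
      have : j ∈ S₀ := by
        by_contra hc
        exact hjD (Finset.mem_sdiff.mpr ⟨hjT, hc⟩)
      exact hzS0 j this
    have hAD : A ⊆ D := by
      intro j hj
      rw [hAdef, Finset.mem_inter, Finset.mem_sdiff] at hj
      exact Finset.mem_sdiff.mpr ⟨hj.1, hj.2.2⟩
    have hBD : B ⊆ D := by
      intro j hj
      rw [hBdef, Finset.mem_inter, Finset.mem_sdiff] at hj
      exact Finset.mem_sdiff.mpr ⟨hj.1, hj.2.2⟩
    have hAB : Disjoint A B := by
      rw [Finset.disjoint_left]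
      intro j hjA hjB
      rw [hAdef, Finset.mem_inter, Finset.mem_sdiff] at hjA
      rw [hBdef, Finset.mem_inter, Finset.mem_sdiff] at hjB
      exact hjA.2.2 (Finset.mem_inter.mpr ⟨hjA.2.1, hjB.2.1⟩)
    have hABD : A ∪ B ⊆ D := Finset.union_subset hAD hBD
    -- split sum over D
    have hsplit : ∑ j ∈ D, z j
        = ∑ j ∈ A, z j + ∑ j ∈ B, z j + ∑ j ∈ D \ (A ∪ B), z j := by
      rw [← Finset.sum_union hAB, ← Finset.sum_sdiff hABD]; ring
    have hb1 : ∑ j ∈ A, z j + (A.card : ℝ) * δ₁ ≤ (A.card : ℝ) := by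
      rw [hδ₁]
      exact bound_aux z hz S₁ A (fun j hj =>
        ((Finset.mem_sdiff.mp (Finset.mem_inter.mp hj).2).1))
    have hb2 : ∑ j ∈ B, z j + (B.card : ℝ) * δ₂ ≤ (B.card : ℝ) := by
      rw [hδ₂]
      exact bound_aux z hz S₂ B (fun j hj =>
        ((Finset.mem_sdiff.mp (Finset.mem_inter.mp hj).2).1))
    have hb3 : ∑ j ∈ D \ (A ∪ B), z j ≤ ((D \ (A ∪ B)).card : ℝ) := by
      calc ∑ j ∈ D \ (A ∪ B), z j ≤ ∑ j ∈ D \ (A ∪ B), (1 : ℝ) := by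
            apply Finset.sum_le_sum
            intro i _; rcases hz i with h | h <;> simp [h]
        _ = _ := by simp
    have hcardD : ((D \ (A ∪ B)).card : ℝ) = (D.card : ℝ) - A.card - B.card := by
      rw [Finset.card_sdiff_of_subset hABD, Finset.card_union_of_disjoint hAB]
      have hle : A.card + B.card ≤ D.card := by
        rw [← Finset.card_union_of_disjoint hAB]
        exact Finset.card_le_card hABD
      push_cast [Nat.cast_sub hle]
      ring
    rw [e0, mul_one, hsum, hsplit]
    have : ((u : ℝ) - D.card) + (D.card : ℝ) = u := by ring
    nlinarith [hb1, hb2, hb3, hcardD]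
end

section
/- Validity of inequality (6): let z ∈ {0,1}^n with ∑_j z_j ≥ l, S_1, S_2 ⊆ {1,...,n} with S_0 = S_1∩S_2 ≠ ∅, δ_i = ∏_{j∈S_i}(1-z_j) for i∈{0,1,2}. Then for any T ⊆ {1,...,n} with |T∪S_0| ≥ n - l: -∑_{j∈T} z_j + (l + |T∪S_0| - n)δ_0 + |S_1∖S_0∖T|·δ_1 + |S_2∖S_0∖T|·δ_2 ≤ 0. -/
theorem ineq6_valid (n l : ℕ) (hn : 0 < n)
    (S₁ S₂ : Finset (Fin n)) (hS₁ : S₁.Nonempty) (hS₂ : S₂.Nonempty)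
    (hS₀ : (S₁ ∩ S₂).Nonempty)
    (z : Fin n → ℝ) (hz : ∀ j, z j = 0 ∨ z j = 1)
    (hcard : (l : ℝ) ≤ ∑ j, z j)
    (δ₀ δ₁ δ₂ : ℝ)
    (hδ₀ : δ₀ = ∏ j ∈ S₁ ∩ S₂, (1 - z j))
    (hδ₁ : δ₁ = ∏ j ∈ S₁, (1 - z j))
    (hδ₂ : δ₂ = ∏ j ∈ S₂, (1 - z j))
    (T : Finset (Fin n)) (hT : n - l ≤ (T ∪ (S₁ ∩ S₂)).card) :
    -∑ j ∈ T, z j + ((l : ℝ) + (T ∪ (S₁ ∩ S₂)).card - n) * δ₀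
      + (((S₁ \ (S₁ ∩ S₂)) \ T).card : ℝ) * δ₁
      + (((S₂ \ (S₁ ∩ S₂)) \ T).card : ℝ) * δ₂ ≤ 0 := by
  set S₀ := S₁ ∩ S₂ with hS0def
  have hz0 : ∀ j, 0 ≤ z j := fun j => by rcases hz j with h | h <;> simp [h]
  have hz1 : ∀ j, z j ≤ 1 := fun j => by rcases hz j with h | h <;> simp [h]
  have h1z0 : ∀ j, 0 ≤ 1 - z j := fun j => by linarith [hz1 j]
  have h1z1 : ∀ j, 1 - z j ≤ 1 := fun j => by linarith [hz0 j]
  have hPnn : ∀ U : Finset (Fin n), 0 ≤ ∏ j ∈ U, (1 - z j) :=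
    fun U => Finset.prod_nonneg fun j _ => h1z0 j
  have hP1 : ∀ U : Finset (Fin n), ∏ j ∈ U, (1 - z j) ≤ 1 :=
    fun U => Finset.prod_le_one (fun j _ => h1z0 j) (fun j _ => h1z1 j)
  have hmono : ∀ M U : Finset (Fin n), M ⊆ U →
      ∏ j ∈ U, (1 - z j) ≤ ∏ j ∈ M, (1 - z j) := by
    intro M U h
    rw [← Finset.prod_sdiff h]
    exact mul_le_of_le_one_left (hPnn M) (hP1 _)
  set A := T ∪ S₀ with hA
  set B₁ := (S₁ \ S₀) \ T with hB₁def
  set B₂ := (S₂ \ S₀) \ T with hB₂def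
  have hδ₀nn : 0 ≤ δ₀ := hδ₀ ▸ hPnn _
  have hδ₀le1 : δ₀ ≤ 1 := hδ₀ ▸ hP1 _
  -- pointwise key bound
  have hkey : ∀ (S : Finset (Fin n)) (δ : ℝ), δ = ∏ j ∈ S, (1 - z j) → S₀ ⊆ S →
      ∀ j ∈ (S \ S₀) \ T, δ ≤ (1 - z j) * δ₀ := by
    intro S δ hδ hsub j hj
    simp only [Finset.mem_sdiff] at hj
    have h1 : insert j S₀ ⊆ S := Finset.insert_subset hj.1.1 hsub
    calc δ ≤ ∏ k ∈ insert j S₀, (1 - z k) := hδ ▸ hmono _ _ h1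
      _ = (1 - z j) * δ₀ := by rw [Finset.prod_insert hj.1.2, hδ₀]
  have hBbound : ∀ (S : Finset (Fin n)) (δ : ℝ), δ = ∏ j ∈ S, (1 - z j) → S₀ ⊆ S →
      (((S \ S₀) \ T).card : ℝ) * δ ≤ (∑ j ∈ (S \ S₀) \ T, (1 - z j)) * δ₀ := by
    intro S δ hδ hsub
    have h := Finset.sum_le_sum (f := fun _ => δ) (g := fun j => (1 - z j) * δ₀)
      (hkey S δ hδ hsub)
    calc (((S \ S₀) \ T).card : ℝ) * δ = ∑ _j ∈ (S \ S₀) \ T, δ := by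
          rw [Finset.sum_const, nsmul_eq_mul]
      _ ≤ ∑ j ∈ (S \ S₀) \ T, (1 - z j) * δ₀ := h
      _ = (∑ j ∈ (S \ S₀) \ T, (1 - z j)) * δ₀ := (Finset.sum_mul _ _ _).symm
  have hB₁le : ((B₁.card : ℝ)) * δ₁ ≤ (∑ j ∈ B₁, (1 - z j)) * δ₀ :=
    hBbound S₁ δ₁ hδ₁ Finset.inter_subset_left
  have hB₂le : ((B₂.card : ℝ)) * δ₂ ≤ (∑ j ∈ B₂, (1 - z j)) * δ₀ :=
    hBbound S₂ δ₂ hδ₂ Finset.inter_subset_right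
  -- z j * δ₀ = 0 on S₀
  have hzero : ∀ j ∈ S₀, z j * δ₀ = 0 := by
    intro j hj
    rcases hz j with h | h
    · simp [h]
    · have : δ₀ = 0 := by
        rw [hδ₀]; exact Finset.prod_eq_zero hj (by simp [h])
      simp [this]
  -- counting part
  have hAcard : (Aᶜ.card : ℝ) = (n : ℝ) - A.card := by
    have h := Finset.card_compl A
    have hle : A.card ≤ n := by
      simpa using Finset.card_le_univ A
    rw [h]
    simp [Nat.cast_sub hle]
  have hsplit : ∑ j, z j = ∑ j ∈ A, z j + ∑ j ∈ Aᶜ, z j :=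
    (Finset.sum_add_sum_compl A z).symm
  have hAcz : ∑ j ∈ Aᶜ, (1 - z j) = (Aᶜ.card : ℝ) - ∑ j ∈ Aᶜ, z j := by
    rw [Finset.sum_sub_distrib, Finset.sum_const, nsmul_eq_mul, mul_one]
  have hBdis : Disjoint B₁ B₂ := by
    rw [Finset.disjoint_left]
    intro j hj1 hj2
    simp only [hB₁def, hB₂def, Finset.mem_sdiff] at hj1 hj2
    exact hj1.1.2 (Finset.mem_inter.mpr ⟨hj1.1.1, hj2.1.1⟩)
  have hBsub : B₁ ∪ B₂ ⊆ Aᶜ := by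
    intro j hj
    simp only [Finset.mem_union, hB₁def, hB₂def, Finset.mem_sdiff] at hj
    simp only [Finset.mem_compl, hA, Finset.mem_union, not_or]
    rcases hj with h | h
    · exact ⟨h.2, h.1.2⟩
    · exact ⟨h.2, h.1.2⟩
  have hBsum : ∑ j ∈ B₁, (1 - z j) + ∑ j ∈ B₂, (1 - z j) ≤ ∑ j ∈ Aᶜ, (1 - z j) := by
    rw [← Finset.sum_union hBdis]
    exact Finset.sum_le_sum_of_subset_of_nonneg hBsub (fun j _ _ => h1z0 j)
  have hX : (l : ℝ) + A.card - n ≤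
      ∑ j ∈ A, z j - ∑ j ∈ B₁, (1 - z j) - ∑ j ∈ B₂, (1 - z j) := by
    linarith [hcard, hsplit, hAcz, hAcard, hBsum]
  have hmul : ((l : ℝ) + A.card - n) * δ₀ ≤
      (∑ j ∈ A, z j) * δ₀ - (∑ j ∈ B₁, (1 - z j)) * δ₀ - (∑ j ∈ B₂, (1 - z j)) * δ₀ := by
    calc ((l : ℝ) + A.card - n) * δ₀
        ≤ (∑ j ∈ A, z j - ∑ j ∈ B₁, (1 - z j) - ∑ j ∈ B₂, (1 - z j)) * δ₀ :=
          mul_le_mul_of_nonneg_right hX hδ₀nn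
      _ = _ := by ring
  have hAz : (∑ j ∈ A, z j) * δ₀ ≤ ∑ j ∈ T, z j := by
    have hA' : A = T ∪ (S₀ \ T) := by rw [hA, Finset.union_sdiff_self_eq_union]
    have hd : Disjoint T (S₀ \ T) := Finset.disjoint_sdiff
    rw [hA', Finset.sum_union hd, add_mul]
    have h1 : (∑ j ∈ S₀ \ T, z j) * δ₀ = 0 := by
      rw [Finset.sum_mul]
      exact Finset.sum_eq_zero fun j hj =>
        hzero j (Finset.sdiff_subset hj)
    have h2 : (∑ j ∈ T, z j) * δ₀ ≤ ∑ j ∈ T, z j :=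
      mul_le_of_le_one_right (Finset.sum_nonneg fun j _ => hz0 j) hδ₀le1
    linarith
  linarith [hmul, hAz, hB₁le, hB₂le]
end
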